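/- The sgn-isotypic component X_r[sgn] = {x ∈ X_r : w·x = sgn(w)x for all w ∈ W} equals the space of antisymmetric tensors in (U′_r)^{⊗p}, where U′_r = span{u^{2i−1} : 1 ≤ i ≤ m−1} ⊆ U_r; consequently X_r[sgn] = {0} if and only if m < p+1, and dim X_r[sgn] = binom(m−1, p) when m ≥ p+1. -/

import Mathlib

/-!
STATEMENT 18.  Let `p ≥ 2`, let `W = 𝔖_p ⋉ μ₂^p` be the hyperoctahedral group
(Weyl group of type `B_p`) with sign character `sgn(σ,ε) = sign(σ)·ε₁⋯ε_p`.  Let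
`r = 2m-1` be an odd positive integer, `U_r = ⊕_{j=0}^{r-1} ℂ u^j` with
`μ₂`-action `(±1)·u^j = (±1)^j u^j`, and `X_r = U_r^{⊗p}` the `W`-module on which
`μ₂^p` acts componentwise and `𝔖_p` permutes the tensor factors.

Theorem: the `sgn`-isotypic component `X_r[sgn]` equals the space of antisymmetric
tensors in `(U'_r)^{⊗p}` where `U'_r = span{u^{2i-1} : 1 ≤ i ≤ m-1}`; consequently
`X_r[sgn] = 0` iff `m < p+1`, and `dim X_r[sgn] = binom(m-1,p)` when `m ≥ p+1`.
-/

noncomputable section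
open scoped TensorProduct

variable (m p : ℕ)

/-- `U_r = ⊕_{j=0}^{r-1} ℂ u^j` for `r = 2m-1`, realised as `Fin (2m-1) → ℂ`
with `u^j` the `j`-th coordinate vector. -/
abbrev Ur (m : ℕ) := Fin (2 * m - 1) → ℂ

/-- `X_r = U_r^{⊗p}`. -/
abbrev Xr (m p : ℕ) := ⨂[ℂ] (_ : Fin p), Ur m

/-- The action of `e ∈ μ₂ = {±1}` on `U_r`:  `u^j ↦ e^j u^j`. -/
def muAct (e : ℤˣ) : Ur m →ₗ[ℂ] Ur m :=
  LinearMap.pi fun j : Fin (2 * m - 1) =>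
    (((e : ℤ) : ℂ) ^ (j : ℕ)) • LinearMap.proj j

/-- The componentwise action of `ε ∈ μ₂^p` on `X_r`. -/
def epsAct (ε : Fin p → ℤˣ) : Xr m p →ₗ[ℂ] Xr m p :=
  PiTensorProduct.map fun i => muAct m (ε i)

/-- The action of a permutation `σ ∈ 𝔖_p` on `X_r`, permuting the tensor factors. -/
def permAct (σ : Equiv.Perm (Fin p)) : Xr m p →ₗ[ℂ] Xr m p :=
  (PiTensorProduct.reindex ℂ (fun _ : Fin p => Ur m) σ).toLinearMap

/-- The `sgn`-isotypic component
`X_r[sgn] = {x | w·x = sgn(w) x for all w = (σ,ε) ∈ W}`. -/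
def XrSgn : Submodule ℂ (Xr m p) :=
  ⨅ (σ : Equiv.Perm (Fin p)) (ε : Fin p → ℤˣ),
    LinearMap.ker (permAct m p σ ∘ₗ epsAct m p ε -
      ((((Equiv.Perm.sign σ : ℤ) : ℂ) * ∏ i, ((ε i : ℤ) : ℂ)) • LinearMap.id))

/-- `U'_r = span{u^{2i-1} : 1 ≤ i ≤ m-1}`, the span of the odd basis vectors. -/
def Uodd : Submodule ℂ (Ur m) :=
  Submodule.span ℂ {f | ∃ j : Fin (2 * m - 1), Odd (j : ℕ) ∧ f = Pi.single j 1}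

/-- The subspace `(U'_r)^{⊗p} ⊆ X_r`, spanned by the pure tensors with all entries
in `U'_r`. -/
def UoddTensors : Submodule ℂ (Xr m p) :=
  Submodule.span ℂ
    {x | ∃ v : Fin p → Ur m, (∀ i, v i ∈ Uodd m) ∧ x = PiTensorProduct.tprod ℂ v}

/-- The antisymmetric tensors in `X_r`. -/
def antisym : Submodule ℂ (Xr m p) :=
  ⨅ σ : Equiv.Perm (Fin p),
    LinearMap.ker (permAct m p σ - (((Equiv.Perm.sign σ : ℤ) : ℂ) • LinearMap.id))

/-!
In the basis `u^{k₁} ⊗ ⋯ ⊗ u^{k_p}` of `X_r`, `ε ∈ μ₂^p` acts diagonally by the character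
`∏ εᵢ^{kᵢ}`, which agrees with `∏ εᵢ` for every `ε` exactly when all `kᵢ` are odd, while `σ`
permutes the indices. Hence `X_r[sgn]` consists of the tensors whose coefficient function is
antisymmetric and supported on odd tuples, which are the antisymmetric tensors in `(U'_r)^{⊗p}`.
Antisymmetry kills the tuples with a repeated entry, so such a function is determined by its
values on strictly increasing odd tuples, i.e. on the `p`-subsets of the `m - 1` odd indices;
antisymmetrising a function supported there shows that these values can be prescribed freely.
-/

open Equiv

section AntisymmetricTupleFunctions

variable {α R : Type*} [CommRing R] {p}

def IsAntisymmOnTuples (c : (Fin p → α) → R) : Prop :=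
  ∀ (σ : Perm (Fin p)) (j : Fin p → α), c (j ∘ σ) = ((Perm.sign σ : ℤ) : R) * c j

def antisymmetrize (c : (Fin p → α) → R) (j : Fin p → α) : R :=
  ∑ σ : Perm (Fin p), ((Perm.sign σ : ℤ) : R) * c (j ∘ σ)

theorem isAntisymmOnTuples_antisymmetrize (c : (Fin p → α) → R) :
    IsAntisymmOnTuples (antisymmetrize c) := by
  intro τ j
  have hτ : ((Perm.sign τ : ℤ) : R) * ((Perm.sign τ : ℤ) : R) = 1 := by
    rw [← Int.cast_mul, ← Units.val_mul, Int.units_mul_self, Units.val_one, Int.cast_one]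
  rw [antisymmetrize, antisymmetrize, Finset.mul_sum]
  conv_rhs => rw [← Equiv.sum_comp (Equiv.mulLeft τ)]
  refine Finset.sum_congr rfl fun σ _ => ?_
  simp only [coe_mulLeft, Perm.sign_mul, Units.val_mul, Int.cast_mul, Perm.coe_mul,
    Function.comp_assoc]
  linear_combination (-(((Perm.sign σ : ℤ) : R) * c (j ∘ τ ∘ σ))) * hτ

variable [LinearOrder α]

theorem Equiv.Perm.eq_one_of_strictMono_comp {t : Fin p → α} {σ : Perm (Fin p)}
    (ht : StrictMono t) (htσ : StrictMono (t ∘ σ)) : σ = 1 := by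
  have hsort : σ = Tuple.sort t := Tuple.eq_sort_iff.mpr
    ⟨htσ.monotone, fun i j hij heq => absurd heq (htσ.injective.ne hij.ne)⟩
  rw [hsort, Tuple.sort_eq_refl_iff_monotone.mpr ht.monotone]
  rfl

theorem antisymmetrize_apply_of_strictMono {g : (Fin p → α) → R}
    (hg : ∀ j, ¬ StrictMono j → g j = 0) {t : Fin p → α} (ht : StrictMono t) :
    antisymmetrize g t = g t := by
  rw [antisymmetrize, Finset.sum_eq_single (1 : Perm (Fin p))]
  · simp
  · intro σ _ hσ
    rw [hg _ fun htσ => hσ (Perm.eq_one_of_strictMono_comp ht htσ), mul_zero]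
  · simp

theorem IsAntisymmOnTuples.eq_zero_of_strictMono [NoZeroDivisors R] [CharZero R]
    {c : (Fin p → α) → R} (hc : IsAntisymmOnTuples c) (h : ∀ j, StrictMono j → c j = 0) :
    c = 0 := by
  funext j
  by_cases hj : Function.Injective j
  · have hsorted : StrictMono (j ∘ Tuple.sort j) :=
      (Tuple.monotone_sort j).strictMono_of_injective (hj.comp (Tuple.sort j).injective)
    have := hc (Tuple.sort j) j
    rw [h _ hsorted, zero_eq_mul] at this
    exact this.resolve_left (Int.cast_ne_zero.mpr (Units.ne_zero _))
  · obtain ⟨a, b, hab, hne⟩ := Function.not_injective_iff.mp hj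
    have hswap : j ∘ swap a b = j := by
      rw [comp_swap_eq_update, hab, Function.update_eq_self, ← hab, Function.update_eq_self]
    have := hc (swap a b) j
    rw [hswap, Perm.sign_swap hne] at this
    simpa [CharZero.eq_neg_self_iff] using this

end AntisymmetricTupleFunctions

theorem Int.forall_units_prod_pow_eq_prod_iff {ι : Type*} [Fintype ι] [DecidableEq ι]
    (k : ι → ℕ) : (∀ ε : ι → ℤˣ, ∏ i, ε i ^ k i = ∏ i, ε i) ↔ ∀ i, Odd (k i) := by
  refine ⟨fun h i => ?_, fun hk ε => Finset.prod_congr rfl fun i _ => ?_⟩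
  · by_contra hi
    have := h (Pi.mulSingle i (-1))
    rw [Finset.prod_pi_mulSingle', Finset.prod_eq_single i (fun j _ hj => by simp [hj]) (by simp),
      Pi.mulSingle_eq_same, (Nat.not_odd_iff_even.mp hi).neg_one_pow] at this
    simp at this
  · rw [Int.units_pow_eq_pow_mod_two, Nat.odd_iff.mp (hk i), pow_one]

theorem Nat.card_orderEmbedding_fin (k n : ℕ) : Nat.card (Fin k ↪o Fin n) = n.choose k := by
  rw [Nat.card_congr Set.powersetCard.ofFinEmbEquiv, Set.powersetCard.card, Nat.card_fin]

namespace Xr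

def basis : Module.Basis (Fin p → Fin (2 * m - 1)) ℂ (Xr m p) :=
  Basis.piTensorProduct fun _ => Pi.basisFun ℂ _

theorem basis_apply (k : Fin p → Fin (2 * m - 1)) :
    basis m p k = PiTensorProduct.tprod ℂ fun i => Pi.single (k i) 1 := by
  simp [basis]

theorem basis_repr_tprod (v : Fin p → Ur m) (k : Fin p → Fin (2 * m - 1)) :
    (basis m p).repr (PiTensorProduct.tprod ℂ v) k = ∏ i, v i (k i) := by
  simp [basis]

theorem repr_permAct (σ : Perm (Fin p)) (x : Xr m p) (j : Fin p → Fin (2 * m - 1)) :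
    (basis m p).repr (permAct m p σ x) j = (basis m p).repr x (j ∘ σ) := by
  suffices ((basis m p).coord j).comp (permAct m p σ) = (basis m p).coord (j ∘ σ) from
    LinearMap.congr_fun this x
  refine PiTensorProduct.ext (MultilinearMap.ext fun v => ?_)
  simp only [LinearMap.compMultilinearMap_apply, LinearMap.comp_apply, Module.Basis.coord_apply,
    permAct, LinearEquiv.coe_coe, PiTensorProduct.reindex_tprod, basis_repr_tprod]
  exact Fintype.prod_equiv σ.symm _ _ fun i => by simp

theorem repr_epsAct (ε : Fin p → ℤˣ) (x : Xr m p) (j : Fin p → Fin (2 * m - 1)) :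
    (basis m p).repr (epsAct m p ε x) j =
      ((∏ i, ε i ^ (j i : ℕ) : ℤˣ) : ℂ) * (basis m p).repr x j := by
  suffices ((basis m p).coord j).comp (epsAct m p ε) =
      ((∏ i, ε i ^ (j i : ℕ) : ℤˣ) : ℂ) • (basis m p).coord j from
    LinearMap.congr_fun this x
  refine PiTensorProduct.ext (MultilinearMap.ext fun v => ?_)
  simp [epsAct, muAct, basis_repr_tprod, Finset.prod_mul_distrib]

theorem permAct_one : permAct m p 1 = LinearMap.id := by
  simp [permAct, Perm.one_def, PiTensorProduct.reindex_refl]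

theorem epsAct_one : epsAct m p 1 = LinearMap.id := by
  have : muAct m 1 = LinearMap.id := by ext; simp [muAct]
  simp [epsAct, this, PiTensorProduct.map_id]

theorem apply_eq_zero_of_mem_Uodd {v : Ur m} (hv : v ∈ Uodd m) {j : Fin (2 * m - 1)}
    (hj : Even (j : ℕ)) : v j = 0 := by
  induction hv using Submodule.span_induction with
  | mem f hf =>
    obtain ⟨k, hk, rfl⟩ := hf
    exact Pi.single_eq_of_ne (by rintro rfl; exact Nat.not_even_iff_odd.mpr hk hj) 1
  | zero => rfl
  | add f g _ _ hf hg => simp [hf, hg]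
  | smul c f _ hf => simp [hf]

theorem mem_UoddTensors_iff (x : Xr m p) :
    x ∈ UoddTensors m p ↔ ∀ j, (∃ i, Even (j i : ℕ)) → (basis m p).repr x j = 0 := by
  constructor
  · rintro hx j ⟨i, hi⟩
    induction hx using Submodule.span_induction with
    | mem y hy =>
      obtain ⟨v, hv, rfl⟩ := hy
      rw [basis_repr_tprod]
      exact Finset.prod_eq_zero (Finset.mem_univ i) (apply_eq_zero_of_mem_Uodd m (hv i) hi)
    | zero => simp
    | add f g _ _ hf hg => simp [hf, hg]
    | smul c f _ hf => simp [hf]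
  · intro h
    rw [← (basis m p).sum_repr x]
    refine Submodule.sum_mem _ fun j _ => ?_
    by_cases hj : ∃ i, Even (j i : ℕ)
    · simp [h j hj]
    · refine Submodule.smul_mem _ _ (Submodule.subset_span ⟨_, fun i => ?_, basis_apply m p j⟩)
      exact Submodule.subset_span ⟨j i, Nat.not_even_iff_odd.mp (not_exists.mp hj i), rfl⟩

theorem mem_antisym_iff (x : Xr m p) :
    x ∈ antisym m p ↔ IsAntisymmOnTuples ((basis m p).repr x) := by
  simp only [antisym, Submodule.mem_iInf, LinearMap.mem_ker, LinearMap.sub_apply,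
    LinearMap.smul_apply, LinearMap.id_apply, sub_eq_zero]
  refine forall_congr' fun σ => ?_
  rw [(basis m p).ext_elem_iff]
  simp [repr_permAct]

theorem forall_epsAct_eq_iff (x : Xr m p) :
    (∀ ε : Fin p → ℤˣ, epsAct m p ε x = ((∏ i, ε i : ℤˣ) : ℂ) • x) ↔
      ∀ j, (∃ i, Even (j i : ℕ)) → (basis m p).repr x j = 0 := by
  simp only [(basis m p).ext_elem_iff, repr_epsAct, map_smul, Finsupp.smul_apply, smul_eq_mul]
  constructor
  · rintro h j ⟨i, hi⟩
    obtain ⟨ε, hε⟩ : ∃ ε : Fin p → ℤˣ, ∏ i, ε i ^ (j i : ℕ) ≠ ∏ i, ε i := by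
      by_contra! hall
      exact Nat.not_even_iff_odd.mpr ((Int.forall_units_prod_pow_eq_prod_iff _).mp hall i) hi
    have hne : ((∏ i, ε i ^ (j i : ℕ) : ℤˣ) : ℂ) - ((∏ i, ε i : ℤˣ) : ℂ) ≠ 0 := by
      rw [sub_ne_zero]; exact_mod_cast Units.val_injective.ne hε
    exact (mul_eq_zero.mp (by rw [sub_mul, h ε j, sub_self])).resolve_left hne
  · intro h ε j
    by_cases hj : ∃ i, Even (j i : ℕ)
    · simp [h j hj]
    · have hodd : ∀ i, Odd (j i : ℕ) := fun i => Nat.not_even_iff_odd.mp (not_exists.mp hj i)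
      rw [(Int.forall_units_prod_pow_eq_prod_iff _).mpr hodd ε]

theorem mem_XrSgn_iff (x : Xr m p) :
    x ∈ XrSgn m p ↔
      (∀ ε : Fin p → ℤˣ, epsAct m p ε x = ((∏ i, ε i : ℤˣ) : ℂ) • x) ∧ x ∈ antisym m p := by
  simp only [XrSgn, antisym, Submodule.mem_iInf, LinearMap.mem_ker, LinearMap.sub_apply,
    LinearMap.comp_apply, LinearMap.smul_apply, LinearMap.id_apply, sub_eq_zero]
  constructor
  · intro h
    refine ⟨fun ε => ?_, fun σ => ?_⟩
    · simpa [permAct_one] using h 1 ε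
    · simpa [epsAct_one] using h σ 1
  · rintro ⟨hε, hσ⟩ σ ε
    rw [hε, map_smul, hσ, smul_smul]
    congr 1
    push_cast
    ring

theorem XrSgn_eq_inf : XrSgn m p = UoddTensors m p ⊓ antisym m p := by
  ext x
  rw [mem_XrSgn_iff, forall_epsAct_eq_iff, Submodule.mem_inf, mem_UoddTensors_iff]

def oddEmb : Fin (m - 1) ↪o Fin (2 * m - 1) :=
  OrderEmbedding.ofStrictMono (fun i => ⟨2 * i + 1, by omega⟩) fun a b h => by
    simp only [Fin.mk_lt_mk]; omega

@[simp]
theorem oddEmb_val (i : Fin (m - 1)) : (oddEmb m i : ℕ) = 2 * i + 1 := rfl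

theorem odd_oddEmb (i : Fin (m - 1)) : Odd (oddEmb m i : ℕ) := odd_two_mul_add_one _

theorem exists_oddEmb_comp_eq {j : Fin p → Fin (2 * m - 1)} (hj : StrictMono j)
    (hodd : ∀ i, Odd (j i : ℕ)) : ∃ f : Fin p ↪o Fin (m - 1), oddEmb m ∘ f = j := by
  have hlt : ∀ i, (j i : ℕ) / 2 < m - 1 := fun i => by
    have := (j i).isLt; have := Nat.odd_iff.mp (hodd i); omega
  have hcomp : oddEmb m ∘ (fun i => ⟨(j i : ℕ) / 2, hlt i⟩) = j := by
    funext i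
    have := Nat.odd_iff.mp (hodd i)
    exact Fin.ext (by simp only [Function.comp_apply, oddEmb_val]; omega)
  refine ⟨OrderEmbedding.ofStrictMono _ fun a b hab => ?_, hcomp⟩
  rw [← hcomp] at hj
  exact (oddEmb m).lt_iff_lt.mp (hj hab)

def oddCoeffs : XrSgn m p →ₗ[ℂ] (Fin p ↪o Fin (m - 1)) → ℂ :=
  LinearMap.pi fun f => ((basis m p).coord (oddEmb m ∘ f)).comp (XrSgn m p).subtype

theorem oddCoeffs_injective : Function.Injective (oddCoeffs m p) := by
  refine (injective_iff_map_eq_zero _).mpr fun ⟨x, hx⟩ hcoeffs => ?_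
  rw [XrSgn_eq_inf, Submodule.mem_inf, mem_UoddTensors_iff, mem_antisym_iff] at hx
  have hrepr := hx.2.eq_zero_of_strictMono fun j hj => by
    by_cases heven : ∃ i, Even (j i : ℕ)
    · exact hx.1 j heven
    · obtain ⟨f, rfl⟩ := exists_oddEmb_comp_eq m p hj
        fun i => Nat.not_even_iff_odd.mp (not_exists.mp heven i)
      exact congrFun hcoeffs f
  have : (basis m p).repr x = 0 := Finsupp.ext (congrFun hrepr)
  exact Subtype.ext ((basis m p).repr.map_eq_zero_iff.mp this)

theorem oddCoeffs_surjective : Function.Surjective (oddCoeffs m p) := by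
  intro d
  have hinj : Function.Injective fun f : Fin p ↪o Fin (m - 1) => oddEmb m ∘ f :=
    fun f f' h => DFunLike.ext _ _ fun i => (oddEmb m).injective (congrFun h i)
  -- `g (oddEmb m ∘ f) = d f`, and `g` vanishes on all other tuples
  set g : (Fin p → Fin (2 * m - 1)) → ℂ :=
    Function.extend (fun f : Fin p ↪o Fin (m - 1) => oddEmb m ∘ f) d 0
  have hg_even : ∀ j, (∃ i, Even (j i : ℕ)) → g j = 0 := by
    rintro j ⟨i, hi⟩
    refine Function.extend_apply' _ _ _ fun ⟨f, hf⟩ => ?_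
    exact Nat.not_even_iff_odd.mpr (hf ▸ odd_oddEmb m (f i)) hi
  have hg_mono : ∀ j, ¬ StrictMono j → g j = 0 := fun j hj =>
    Function.extend_apply' _ _ _ fun ⟨f, hf⟩ => hj (hf ▸ (oddEmb m).strictMono.comp f.strictMono)
  set x := (basis m p).repr.symm (Finsupp.equivFunOnFinite.symm (antisymmetrize g))
  have hx : ⇑((basis m p).repr x) = antisymmetrize g := by simp [x]
  have hmem : x ∈ XrSgn m p := by
    rw [XrSgn_eq_inf, Submodule.mem_inf, mem_UoddTensors_iff, mem_antisym_iff, hx]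
    refine ⟨fun j ⟨i, hi⟩ => Finset.sum_eq_zero fun σ _ => ?_,
      isAntisymmOnTuples_antisymmetrize g⟩
    rw [hg_even _ ⟨σ⁻¹ i, by simpa using hi⟩, mul_zero]
  refine ⟨⟨x, hmem⟩, funext fun f => ?_⟩
  change (basis m p).repr x (oddEmb m ∘ f) = d f
  rw [hx, antisymmetrize_apply_of_strictMono hg_mono ((oddEmb m).strictMono.comp f.strictMono)]
  exact hinj.extend_apply d 0 f

theorem finrank_XrSgn : Module.finrank ℂ (XrSgn m p) = (m - 1).choose p := by
  rw [(LinearEquiv.ofBijective (oddCoeffs m p)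
      ⟨oddCoeffs_injective m p, oddCoeffs_surjective m p⟩).finrank_eq,
    Module.finrank_eq_nat_card_basis (Pi.basisFun ℂ _), Nat.card_orderEmbedding_fin]

end Xr

theorem sgn_isotypic_of_Xr (hm : 1 ≤ m) :
    XrSgn m p = UoddTensors m p ⊓ antisym m p ∧
    (XrSgn m p = ⊥ ↔ m < p + 1) ∧
    (p + 1 ≤ m → Module.finrank ℂ (XrSgn m p) = (m - 1).choose p) := by
  refine ⟨Xr.XrSgn_eq_inf m p, ?_, fun _ => Xr.finrank_XrSgn m p⟩
  rw [← Submodule.finrank_eq_zero, Xr.finrank_XrSgn, Nat.choose_eq_zero_iff]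
  omega

end
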